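/- In the setting of the Jacobian bound for the N-particle flow: for every φ_m ∈ C¹_c((ℝ^d)^m) viewed as a function of n ≥ m variables, ‖∑_{k=1}^n |∂_{z_k}(φ_m ∘ T^n_s)|‖_{L^∞((ℝ^d)^n)} ≤ (e^{L|s|} + (1/2)e^{3L|s|}) ∑_{k=1}^m ‖∂_{z_k} φ_m‖_{L^∞((ℝ^d)^m)}, uniformly in n. -/

import Mathlib

/-!
The velocity `(1/n) ∑_l K(z_k, z_l)` of particle `k` is `L`-Lipschitz in `z_k` and
`(L/n)`-Lipschitz in the `ℓ¹` norm of the whole configuration. Hence, by Grönwall, the `ℓ¹`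
distance of two trajectories grows at most like `e^{2L|s|}`, and feeding this back into the
equation of a single particle gives
`|δ_k(s)| ≤ |δ_k(0)| e^{L|s|} + ‖δ(0)‖₁ (e^{2L|s|} - e^{L|s|}) / n`.
Moving only the initial position `z_k` then bounds the Jacobian block `∂_{z_k} (T_s)_l` by
`α_{lk} = δ_{lk} e^{L|s|} + e^{3L|s|} / (2n)`. By the chain rule
`∑_k |∂_{z_k} (φ ∘ T_s)| ≤ ∑_{i ≤ m} ‖∂_{z_i} φ‖_∞ ∑_k α_{ik}`, and every row sum of `α` equals
`e^{L|s|} + ½ e^{3L|s|}`, whatever `n` is.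
-/

open MeasureTheory

/-- The continuous linear embedding of `ℝ^d` into the `k`-th coordinate of `(ℝ^d)^n`. -/
noncomputable def coordCLM (d n : ℕ) (k : Fin n) :
    EuclideanSpace ℝ (Fin d) →L[ℝ] (Fin n → EuclideanSpace ℝ (Fin d)) :=
  LinearMap.toContinuousLinearMap (LinearMap.single ℝ (fun _ : Fin n => EuclideanSpace ℝ (Fin d)) k)

/-- The norm of the `k`-th partial gradient `∂_{z_k} ψ(Z)` of a scalar function `ψ`
on `(ℝ^d)^n`. -/
noncomputable def partialGradNorm {d n : ℕ} (ψ : (Fin n → EuclideanSpace ℝ (Fin d)) → ℝ)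
    (k : Fin n) (Z : Fin n → EuclideanSpace ℝ (Fin d)) : ℝ :=
  ‖(fderiv ℝ ψ Z).comp (coordCLM d n k)‖

open Set Real Finset Filter Topology

section Gronwall

variable {E : Type*} [NormedAddCommGroup E] [NormedSpace ℝ E]

lemma norm_le_of_norm_deriv_right_le_mul_add_exp {g g' : ℝ → E} {L c b : ℝ} (hL : 0 < L)
    (hg : ContinuousOn g (Icc 0 b)) (hg' : ∀ x ∈ Ico 0 b, HasDerivWithinAt g (g' x) (Ici x) x)
    (bound : ∀ x ∈ Ico 0 b, ‖g' x‖ ≤ L * ‖g x‖ + c * exp (2 * L * x)) :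
    ∀ x ∈ Icc 0 b, ‖g x‖ ≤ ‖g 0‖ * exp (L * x) + c / L * (exp (2 * L * x) - exp (L * x)) := by
  intro x hx
  set B : ℝ → ℝ := fun t => ‖g 0‖ * exp (L * t) + c / L * (exp (2 * L * t) - exp (L * t))
  have hexp : ∀ a t : ℝ, HasDerivAt (fun t => exp (a * t)) (a * exp (a * t)) t := fun a t => by
    simpa [mul_comm] using ((hasDerivAt_id t).const_mul a).exp
  have hB : ∀ t, HasDerivAt B (L * B t + c * exp (2 * L * t)) t := fun t => by
    refine (((hexp L t).const_mul ‖g 0‖).add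
      (((hexp (2 * L) t).sub (hexp L t)).const_mul (c / L))).congr_deriv ?_
    simp only [B]
    field_simp
    ring
  -- perturbing `B` by `η e^{2Lt}` makes the differential inequality strict
  have hBη : ∀ η > 0, ‖g x‖ ≤ B x + η * exp (2 * L * x) := fun η hη => by
    refine image_norm_le_of_norm_deriv_right_lt_deriv_boundary hg hg' ?_
      (fun t => (hB t).add ((hexp (2 * L) t).const_mul η)) (fun t ht hgt => ?_) hx
    · simp [B, hη.le]
    · calc ‖g' t‖ ≤ L * ‖g t‖ + c * exp (2 * L * t) := bound t ht
        _ < _ := by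
          simp only [Pi.add_apply] at hgt ⊢
          rw [hgt]; nlinarith [exp_pos (2 * L * t), mul_pos hL hη]
  have hlim : Tendsto (fun η => B x + η * exp (2 * L * x)) (𝓝[>] 0) (𝓝 (B x)) := by
    refine tendsto_nhdsWithin_of_tendsto_nhds ?_
    have hcont : Continuous fun η => B x + η * exp (2 * L * x) := by fun_prop
    simpa using hcont.tendsto 0
  exact ge_of_tendsto hlim (eventually_nhdsWithin_of_forall hBη)

variable {n : ℕ} {L : ℝ} {G G' : ℝ → Fin n → E}

lemma sum_norm_le_of_norm_deriv_le (hL : 0 ≤ L)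
    (hd : ∀ t l, HasDerivAt (fun s => G s l) (G' t l) t)
    (hB : ∀ t k, ‖G' t k‖ ≤ L * ‖G t k‖ + L / n * ∑ l, ‖G t l‖) {b : ℝ} (hb : 0 ≤ b) :
    ∑ l, ‖G b l‖ ≤ (∑ l, ‖G 0 l‖) * exp (2 * L * b) := by
  -- Grönwall's inequality for `G` in the `ℓ¹` norm
  let e := (PiLp.continuousLinearEquiv 1 ℝ (fun _ : Fin n => E)).symm
  have hF : ∀ t, HasDerivAt (fun s => e (G s)) (e (G' t)) t := fun t =>
    e.hasFDerivAt.comp_hasDerivAt t (hasDerivAt_pi.2 fun l => hd t l)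
  have hnorm : ∀ v, ‖e v‖ = ∑ l, ‖v l‖ := fun v => PiLp.norm_eq_of_L1 _
  have hmean : (n : ℝ) * (L / n) ≤ L := by
    rcases n.eq_zero_or_pos with rfl | hn
    · simpa using hL
    · rw [mul_div_cancel₀ _ (by positivity)]
  have key := norm_le_gronwallBound_of_norm_deriv_right_le (K := 2 * L) (ε := 0)
    (fun t _ => (hF t).continuousAt.continuousWithinAt) (fun t _ => (hF t).hasDerivWithinAt)
    le_rfl (fun t _ => ?_) b ⟨hb, le_rfl⟩
  · simpa only [hnorm, gronwallBound_ε0, sub_zero] using key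
  · rw [hnorm, hnorm, add_zero]
    calc ∑ l, ‖G' t l‖ ≤ ∑ l, (L * ‖G t l‖ + L / n * ∑ j, ‖G t j‖) := sum_le_sum fun l _ => hB t l
      _ = L * ∑ l, ‖G t l‖ + n * (L / n) * ∑ j, ‖G t j‖ := by
          rw [sum_add_distrib, ← mul_sum, sum_const, card_univ, Fintype.card_fin, nsmul_eq_mul,
            mul_assoc]
      _ ≤ L * ∑ l, ‖G t l‖ + L * ∑ j, ‖G t j‖ := by gcongr
      _ = 2 * L * ∑ l, ‖G t l‖ := by ring

lemma norm_le_of_norm_deriv_le_of_nonneg (hL : 0 < L)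
    (hd : ∀ t l, HasDerivAt (fun s => G s l) (G' t l) t)
    (hB : ∀ t k, ‖G' t k‖ ≤ L * ‖G t k‖ + L / n * ∑ l, ‖G t l‖) (k : Fin n) {b : ℝ} (hb : 0 ≤ b) :
    ‖G b k‖ ≤ ‖G 0 k‖ * exp (L * b) + (∑ l, ‖G 0 l‖) / n * (exp (2 * L * b) - exp (L * b)) := by
  have key := norm_le_of_norm_deriv_right_le_mul_add_exp (c := L / n * ∑ l, ‖G 0 l‖) hL
    (fun t _ => (hd t k).continuousAt.continuousWithinAt) (fun t _ => (hd t k).hasDerivWithinAt)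
    (fun t ht => (hB t k).trans ?_) b ⟨hb, le_rfl⟩
  · convert key using 3
    field_simp
  · have hsum := sum_norm_le_of_norm_deriv_le hL.le hd hB ht.1
    rw [mul_assoc]
    gcongr

lemma norm_le_of_norm_deriv_le (hL : 0 < L)
    (hd : ∀ t l, HasDerivAt (fun s => G s l) (G' t l) t)
    (hB : ∀ t k, ‖G' t k‖ ≤ L * ‖G t k‖ + L / n * ∑ l, ‖G t l‖) (k : Fin n) (t : ℝ) :
    ‖G t k‖ ≤ ‖G 0 k‖ * exp (L * |t|)
      + (∑ l, ‖G 0 l‖) / n * (exp (2 * L * |t|) - exp (L * |t|)) := by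
  rcases le_or_gt 0 t with ht | ht
  · rw [abs_of_nonneg ht]
    exact norm_le_of_norm_deriv_le_of_nonneg hL hd hB k ht
  · have hrev := norm_le_of_norm_deriv_le_of_nonneg (G := fun s => G (-s))
      (G' := fun s l => (-1 : ℝ) • G' (-s) l) hL
      (fun s l => (hd (-s) l).scomp s (hasDerivAt_neg s))
      (fun s l => by simpa only [norm_smul, norm_neg, norm_one, one_mul] using hB (-s) l) k
      (neg_nonneg.2 ht.le)
    rw [abs_of_neg ht]
    simpa using hrev

end Gronwall

section MeanField

variable {E : Type*} [NormedAddCommGroup E] [NormedSpace ℝ E] {n : ℕ}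

noncomputable def meanFieldVelocity (K : E × E → E) (Z : Fin n → E) (k : Fin n) : E :=
  (n : ℝ)⁻¹ • ∑ l, K (Z k, Z l)

lemma norm_meanFieldVelocity_sub_le {K : E × E → E} {L : ℝ}
    (hKlip1 : ∀ z' z₁ z₂, ‖K (z₁, z') - K (z₂, z')‖ ≤ L * ‖z₁ - z₂‖)
    (hKlip2 : ∀ z z₁ z₂, ‖K (z, z₁) - K (z, z₂)‖ ≤ L * ‖z₁ - z₂‖) (V W : Fin n → E) (k : Fin n) :
    ‖meanFieldVelocity K V k - meanFieldVelocity K W k‖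
      ≤ L * ‖V k - W k‖ + L / n * ∑ l, ‖V l - W l‖ := by
  have hn : (n : ℝ) ≠ 0 := Nat.cast_ne_zero.2 k.pos.ne'
  have hpair : ∀ l, ‖K (V k, V l) - K (W k, W l)‖ ≤ L * ‖V k - W k‖ + L * ‖V l - W l‖ := fun l =>
    calc ‖K (V k, V l) - K (W k, W l)‖
        ≤ ‖K (V k, V l) - K (W k, V l)‖ + ‖K (W k, V l) - K (W k, W l)‖ :=
          norm_sub_le_norm_sub_add_norm_sub _ _ _
      _ ≤ L * ‖V k - W k‖ + L * ‖V l - W l‖ := add_le_add (hKlip1 _ _ _) (hKlip2 _ _ _)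
  rw [meanFieldVelocity, meanFieldVelocity, ← smul_sub, ← sum_sub_distrib, norm_smul, norm_inv,
    Real.norm_natCast]
  calc (n : ℝ)⁻¹ * ‖∑ l, (K (V k, V l) - K (W k, W l))‖
      ≤ (n : ℝ)⁻¹ * ∑ l, (L * ‖V k - W k‖ + L * ‖V l - W l‖) := by
        gcongr
        exact (norm_sum_le _ _).trans (sum_le_sum fun l _ => hpair l)
    _ = L * ‖V k - W k‖ + L / n * ∑ l, ‖V l - W l‖ := by
        rw [sum_add_distrib, sum_const, card_univ, Fintype.card_fin, nsmul_eq_mul, ← mul_sum]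
        field_simp

lemma norm_flow_sub_le {K : E × E → E} {L : ℝ} (hL : 0 < L)
    (hKlip1 : ∀ z' z₁ z₂, ‖K (z₁, z') - K (z₂, z')‖ ≤ L * ‖z₁ - z₂‖)
    (hKlip2 : ∀ z z₁ z₂, ‖K (z, z₁) - K (z, z₂)‖ ≤ L * ‖z₁ - z₂‖)
    {T : ℝ → (Fin n → E) → Fin n → E} (hT0 : ∀ Z, T 0 Z = Z)
    (hODE : ∀ Z k t, HasDerivAt (fun s => T s Z k) (meanFieldVelocity K (T t Z) k) t)
    (s : ℝ) (V W : Fin n → E) (k : Fin n) :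
    ‖T s V k - T s W k‖ ≤ ‖V k - W k‖ * exp (L * |s|)
      + (∑ l, ‖V l - W l‖) / n * (exp (2 * L * |s|) - exp (L * |s|)) := by
  simpa only [hT0] using norm_le_of_norm_deriv_le (G := fun t l => T t V l - T t W l) hL
    (fun t l => (hODE V l t).sub (hODE W l t))
    (fun t l => norm_meanFieldVelocity_sub_le hKlip1 hKlip2 (T t V) (T t W) l) k s

end MeanField

section PartialGradients

variable {d n m : ℕ}

lemma norm_fderiv_comp_coordCLM_le {F : Type*} [NormedAddCommGroup F] [NormedSpace ℝ F]
    {f : (Fin n → EuclideanSpace ℝ (Fin d)) → F} {Z : Fin n → EuclideanSpace ℝ (Fin d)}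
    (hf : DifferentiableAt ℝ f Z) {k : Fin n} {C : ℝ} (hC : 0 ≤ C)
    (hlip : ∀ h, ‖f (Z + Pi.single k h) - f Z‖ ≤ C * ‖h‖) :
    ‖(fderiv ℝ f Z).comp (coordCLM d n k)‖ ≤ C := by
  have hin : HasFDerivAt (fun h => Z + coordCLM d n k h) (coordCLM d n k) 0 :=
    (coordCLM d n k).hasFDerivAt.const_add Z
  have hout : HasFDerivAt f (fderiv ℝ f Z) (Z + coordCLM d n k 0) := by
    simpa using hf.hasFDerivAt
  refine (hout.comp 0 hin).le_of_lip' hC (Eventually.of_forall fun h => ?_)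
  simpa [coordCLM] using hlip h

lemma norm_fderiv_apply_le_sum_partialGradNorm
    (φ : (Fin m → EuclideanSpace ℝ (Fin d)) → ℝ) (Y w : Fin m → EuclideanSpace ℝ (Fin d)) :
    ‖fderiv ℝ φ Y w‖ ≤ ∑ i, partialGradNorm φ i Y * ‖w i‖ := by
  conv_lhs => rw [← Finset.univ_sum_single w, map_sum]
  exact (norm_sum_le _ _).trans
    (sum_le_sum fun i _ => ((fderiv ℝ φ Y).comp (coordCLM d m i)).le_opNorm (w i))

lemma partialGradNorm_comp_le
    {F : (Fin n → EuclideanSpace ℝ (Fin d)) → Fin m → EuclideanSpace ℝ (Fin d)}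
    {φ : (Fin m → EuclideanSpace ℝ (Fin d)) → ℝ} {Z : Fin n → EuclideanSpace ℝ (Fin d)}
    (hF : ∀ i, DifferentiableAt ℝ (fun W => F W i) Z) (hφ : DifferentiableAt ℝ φ (F Z))
    (k : Fin n) :
    partialGradNorm (fun W => φ (F W)) k Z ≤
      ∑ i, partialGradNorm φ i (F Z) * ‖(fderiv ℝ (fun W => F W i) Z).comp (coordCLM d n k)‖ := by
  have hd : HasFDerivAt (fun W => φ (F W)) _ Z :=
    hφ.hasFDerivAt.comp Z (hasFDerivAt_pi.2 fun i => (hF i).hasFDerivAt)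
  rw [partialGradNorm, hd.fderiv]
  refine ContinuousLinearMap.opNorm_le_bound _
    (sum_nonneg fun i _ => mul_nonneg (norm_nonneg _) (norm_nonneg _)) fun h => ?_
  calc _ ≤ ∑ i, partialGradNorm φ i (F Z) *
          ‖((fderiv ℝ (fun W => F W i) Z).comp (coordCLM d n k)) h‖ :=
        norm_fderiv_apply_le_sum_partialGradNorm φ (F Z) _
    _ ≤ ∑ i, partialGradNorm φ i (F Z) *
          (‖(fderiv ℝ (fun W => F W i) Z).comp (coordCLM d n k)‖ * ‖h‖) := by
        gcongr with i
        · exact norm_nonneg _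
        · exact ContinuousLinearMap.le_opNorm _ _
    _ = _ := by simp only [sum_mul, mul_assoc]

lemma partialGradNorm_le_iSup {φ : (Fin m → EuclideanSpace ℝ (Fin d)) → ℝ}
    (hφ : ContDiff ℝ 1 φ) (hsupp : HasCompactSupport φ) (i : Fin m)
    (X : Fin m → EuclideanSpace ℝ (Fin d)) :
    partialGradNorm φ i X ≤ ⨆ X, partialGradNorm φ i X := by
  obtain ⟨C, hC⟩ := (hsupp.fderiv (𝕜 := ℝ)).exists_bound_of_continuous
    (hφ.continuous_fderiv one_ne_zero)
  refine le_ciSup ⟨C * ‖coordCLM d m i‖, ?_⟩ X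
  rintro _ ⟨Y, rfl⟩
  exact (ContinuousLinearMap.opNorm_comp_le _ _).trans (by gcongr; exact hC Y)

end PartialGradients

section FlowJacobian

variable {d n : ℕ}

lemma exp_two_mul_sub_exp_le (x : ℝ) : exp (2 * x) - exp x ≤ exp (3 * x) / 2 := by
  have h2 : exp (2 * x) = exp x ^ 2 := by rw [← exp_nat_mul]; norm_num
  have h3 : exp (3 * x) = exp x ^ 3 := by rw [← exp_nat_mul]; norm_num
  rw [h2, h3]
  nlinarith [exp_pos x, mul_nonneg (exp_pos x).le (sq_nonneg (exp x - 1))]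

/-- The paper's bound `α_{lk}(s)` on the Jacobian block `∂_{z_k} (T_s)_l`. -/
noncomputable def flowJacobianBound (n : ℕ) (L s : ℝ) (l k : Fin n) : ℝ :=
  (if l = k then exp (L * |s|) else 0) + exp (3 * L * |s|) / (2 * n)

lemma flowJacobianBound_nonneg (L s : ℝ) (l k : Fin n) : 0 ≤ flowJacobianBound n L s l k := by
  unfold flowJacobianBound
  split_ifs <;> positivity

lemma sum_flowJacobianBound (L s : ℝ) (l : Fin n) :
    ∑ k, flowJacobianBound n L s l k = exp (L * |s|) + 1 / 2 * exp (3 * L * |s|) := by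
  have hn : (n : ℝ) ≠ 0 := Nat.cast_ne_zero.2 l.pos.ne'
  simp only [flowJacobianBound, sum_add_distrib, sum_ite_eq, Finset.mem_univ, if_true, sum_const,
    card_univ, Fintype.card_fin, nsmul_eq_mul]
  field_simp

lemma norm_fderiv_flow_comp_coordCLM_le
    {K : EuclideanSpace ℝ (Fin d) × EuclideanSpace ℝ (Fin d) → EuclideanSpace ℝ (Fin d)}
    {L : ℝ} (hL : 0 < L)
    (hKlip1 : ∀ z' z₁ z₂, ‖K (z₁, z') - K (z₂, z')‖ ≤ L * ‖z₁ - z₂‖)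
    (hKlip2 : ∀ z z₁ z₂, ‖K (z, z₁) - K (z, z₂)‖ ≤ L * ‖z₁ - z₂‖)
    {T : ℝ → (Fin n → EuclideanSpace ℝ (Fin d)) → Fin n → EuclideanSpace ℝ (Fin d)}
    (hT0 : ∀ Z, T 0 Z = Z)
    (hODE : ∀ Z k t, HasDerivAt (fun s => T s Z k) (meanFieldVelocity K (T t Z) k) t)
    (hTdiff : ∀ t l, Differentiable ℝ (fun Z => T t Z l))
    (s : ℝ) (Z : Fin n → EuclideanSpace ℝ (Fin d)) (l k : Fin n) :
    ‖(fderiv ℝ (fun W => T s W l) Z).comp (coordCLM d n k)‖ ≤ flowJacobianBound n L s l k := by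
  refine norm_fderiv_comp_coordCLM_le (hTdiff s l Z) (flowJacobianBound_nonneg L s l k)
    fun h => ?_
  have hflow := norm_flow_sub_le hL hKlip1 hKlip2 hT0 hODE s (Z + Pi.single k h) Z l
  have hsingle : ∀ j, ‖(Pi.single k h : Fin n → EuclideanSpace ℝ (Fin d)) j‖
      = if j = k then ‖h‖ else 0 := fun j => by
    rcases eq_or_ne j k with rfl | hjk <;> simp [*]
  have hexp : exp (2 * L * |s|) - exp (L * |s|) ≤ exp (3 * L * |s|) / 2 := by
    simpa only [mul_assoc] using exp_two_mul_sub_exp_le (L * |s|)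
  simp only [Pi.add_apply, add_sub_cancel_left, hsingle, sum_ite_eq', Finset.mem_univ,
    if_true] at hflow
  refine hflow.trans ?_
  calc (if l = k then ‖h‖ else 0) * exp (L * |s|) + ‖h‖ / n * (exp (2 * L * |s|) - exp (L * |s|))
      ≤ (if l = k then ‖h‖ else 0) * exp (L * |s|) + ‖h‖ / n * (exp (3 * L * |s|) / 2) := by
        gcongr
    _ = flowJacobianBound n L s l k * ‖h‖ := by
        unfold flowJacobianBound
        split_ifs <;> ring

end FlowJacobian

theorem stmt_18_general (d n m : ℕ) (hmn : m ≤ n) (L : ℝ) (hL : 0 < L)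
    (K : EuclideanSpace ℝ (Fin d) × EuclideanSpace ℝ (Fin d) → EuclideanSpace ℝ (Fin d))
    (hKlip1 : ∀ z' z₁ z₂, ‖K (z₁, z') - K (z₂, z')‖ ≤ L * ‖z₁ - z₂‖)
    (hKlip2 : ∀ z z₁ z₂, ‖K (z, z₁) - K (z, z₂)‖ ≤ L * ‖z₁ - z₂‖)
    -- the `n`-particle flow `T^n_s`
    (T : ℝ → (Fin n → EuclideanSpace ℝ (Fin d)) → (Fin n → EuclideanSpace ℝ (Fin d)))
    (hT0 : ∀ Z, T 0 Z = Z)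
    (hODE : ∀ Z k t, HasDerivAt (fun s => T s Z k)
      ((n : ℝ)⁻¹ • ∑ l, K (T t Z k, T t Z l)) t)
    (hTdiff : ∀ t l, Differentiable ℝ (fun Z => T t Z l))
    -- a `C¹` compactly supported test function of `m` variables, viewed as a
    -- function of `n ≥ m` variables
    (φm : (Fin m → EuclideanSpace ℝ (Fin d)) → ℝ)
    (hφ : ContDiff ℝ 1 φm) (hφsupp : HasCompactSupport φm) :
    ∀ (s : ℝ) (Z : Fin n → EuclideanSpace ℝ (Fin d)),
      ∑ k : Fin n,
        partialGradNorm (fun W => φm fun i : Fin m => T s W (Fin.castLE hmn i)) k Z ≤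
        (Real.exp (L * |s|) + (1 / 2) * Real.exp (3 * L * |s|)) *
          ∑ k : Fin m, ⨆ X, partialGradNorm φm k X := by
  intro s Z
  set Y : Fin m → EuclideanSpace ℝ (Fin d) := fun i => T s Z (Fin.castLE hmn i)
  have hchain : ∀ k, partialGradNorm (fun W => φm fun i => T s W (Fin.castLE hmn i)) k Z ≤
      ∑ i, partialGradNorm φm i Y * flowJacobianBound n L s (Fin.castLE hmn i) k := fun k =>
    (partialGradNorm_comp_le (fun i => hTdiff s _ Z) (hφ.differentiable one_ne_zero Y) k).trans
      (sum_le_sum fun i _ => mul_le_mul_of_nonneg_left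
        (norm_fderiv_flow_comp_coordCLM_le hL hKlip1 hKlip2 hT0 hODE hTdiff s Z _ k)
        (norm_nonneg _))
  calc _ ≤ ∑ k, ∑ i, partialGradNorm φm i Y * flowJacobianBound n L s (Fin.castLE hmn i) k :=
        sum_le_sum fun k _ => hchain k
    _ = ∑ i, partialGradNorm φm i Y * (exp (L * |s|) + 1 / 2 * exp (3 * L * |s|)) := by
        rw [sum_comm]
        simp only [← mul_sum, sum_flowJacobianBound]
    _ ≤ ∑ i, (⨆ X, partialGradNorm φm i X) * (exp (L * |s|) + 1 / 2 * exp (3 * L * |s|)) := by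
        gcongr with i
        exact partialGradNorm_le_iSup hφ hφsupp i Y
    _ = _ := by rw [← sum_mul, mul_comm]

/-- Uniform-in-`n` bound on the derivatives of `φ_m ∘ T^n_s`:
`‖∑_k |∂_{z_k}(φ_m ∘ T^n_s)|‖_∞ ≤ (e^{L|s|} + ½ e^{3L|s|}) ∑_{k≤m} ‖∂_{z_k} φ_m‖_∞`. -/
theorem stmt_18 (d n m : ℕ) (hm : 1 ≤ m) (hmn : m ≤ n) (L : ℝ) (hL : 0 < L)
    (K : EuclideanSpace ℝ (Fin d) × EuclideanSpace ℝ (Fin d) → EuclideanSpace ℝ (Fin d))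
    (hKcont : Continuous K)
    (hKanti : ∀ z z', K (z, z') + K (z', z) = 0)
    (hKlip1 : ∀ z' z₁ z₂, ‖K (z₁, z') - K (z₂, z')‖ ≤ L * ‖z₁ - z₂‖)
    (hKlip2 : ∀ z z₁ z₂, ‖K (z, z₁) - K (z, z₂)‖ ≤ L * ‖z₁ - z₂‖)
    -- the `n`-particle flow `T^n_s`
    (T : ℝ → (Fin n → EuclideanSpace ℝ (Fin d)) → (Fin n → EuclideanSpace ℝ (Fin d)))
    (hT0 : ∀ Z, T 0 Z = Z)
    (hODE : ∀ Z k t, HasDerivAt (fun s => T s Z k)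
      ((n : ℝ)⁻¹ • ∑ l, K (T t Z k, T t Z l)) t)
    (hTdiff : ∀ t l, Differentiable ℝ (fun Z => T t Z l))
    -- a `C¹` compactly supported test function of `m` variables, viewed as a
    -- function of `n ≥ m` variables
    (φm : (Fin m → EuclideanSpace ℝ (Fin d)) → ℝ)
    (hφ : ContDiff ℝ 1 φm) (hφsupp : HasCompactSupport φm) :
    ∀ (s : ℝ) (Z : Fin n → EuclideanSpace ℝ (Fin d)),
      ∑ k : Fin n,
        partialGradNorm (fun W => φm fun i : Fin m => T s W (Fin.castLE hmn i)) k Z ≤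
        (Real.exp (L * |s|) + (1 / 2) * Real.exp (3 * L * |s|)) *
          ∑ k : Fin m, ⨆ X, partialGradNorm φm k X :=
  stmt_18_general d n m hmn L hL K hKlip1 hKlip2 T hT0 hODE hTdiff φm hφ hφsupp
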